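/- Let m ≥ 1, 1 ≤ k ≤ m, let U ⊆ ℂ be open, and let P, Q : U → M_m(ℂ) be continuously real-differentiable matrix-valued functions satisfying the zero-curvature equation ∂_z Q − ∂_{z̄} P + PQ − QP = 0 on U, where the Wirtinger derivatives are taken entrywise. Then the k-th additive compounds satisfy the zero-curvature equation as well: ∂_z (Q^{[k]}) − ∂_{z̄} (P^{[k]}) + P^{[k]} Q^{[k]} − Q^{[k]} P^{[k]} = 0 on U. -/

import Mathlib

/-- The Wirtinger derivative `f_z = ½(∂f/∂x − i ∂f/∂y)`. -/
noncomputable def wirtingerDz (f : ℂ → ℂ) (z : ℂ) : ℂ :=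
  (fderiv ℝ f z 1 - Complex.I * fderiv ℝ f z Complex.I) / 2

/-- The Wirtinger derivative `f_z̄ = ½(∂f/∂x + i ∂f/∂y)`. -/
noncomputable def wirtingerDzbar (f : ℂ → ℂ) (z : ℂ) : ℂ :=
  (fderiv ℝ f z 1 + Complex.I * fderiv ℝ f z Complex.I) / 2

/-- The `k`-th compound matrix: indexed by `k`-element subsets `S, T` of the row
and column index sets, with `(S,T)`-entry the determinant of the `k×k` submatrix
with rows `S` and columns `T`, each listed in increasing order. -/
noncomputable def compound {m : ℕ} (k : ℕ) (M : Matrix (Fin m) (Fin m) ℂ) :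
    Matrix {S : Finset (Fin m) // S.card = k} {S : Finset (Fin m) // S.card = k} ℂ :=
  Matrix.of fun S T =>
    (M.submatrix (fun a : Fin k => ((S.1.orderIsoOfFin S.2 a : Fin m)))
      (fun b : Fin k => ((T.1.orderIsoOfFin T.2 b : Fin m)))).det

/-- The `k`-th additive compound: the derivative at `t = 0` of
`t ↦ (I + tA)^{(k)}`, entrywise. -/
noncomputable def addCompound {m : ℕ} (k : ℕ) (A : Matrix (Fin m) (Fin m) ℂ) :
    Matrix {S : Finset (Fin m) // S.card = k} {S : Finset (Fin m) // S.card = k} ℂ :=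
  Matrix.of fun S T => deriv (fun t : ℂ => compound k (1 + t • A) S T) 0

/-! The `k`-th compound of `M` is the matrix of `⋀^k M` in the basis of wedge products of
standard basis vectors, hence multiplicative. Over any commutative algebra, a square-zero scalar
`e` gives `(1 + e • A)^{(k)} = 1 + e • A^{[k]}`. Take two square-zero scalars `e`, `d` whose
product is faithful (inside the dual numbers over the dual numbers). Then
`(1 + d • B)(1 + e • A) = (1 + e • A)(1 + d • B)(1 + e d • [B, A])`; taking compounds and
cancelling the unit `(1 + e • A^{[k]})(1 + d • B^{[k]})` shows that `A ↦ A^{[k]}` preserves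
commutators. The same device shows it is linear, so it commutes with the Wirtinger derivatives
and carries the zero-curvature equation of `P, Q` to that of `P^{[k]}, Q^{[k]}`. -/

open Matrix Polynomial

section SquareZero

variable {R' 𝒜 : Type*} [CommRing R'] [Ring 𝒜] [Algebra R' 𝒜]

theorem one_add_smul_mul_one_add_smul (e d : R') (x y : 𝒜) :
    (1 + e • x) * (1 + d • y) = 1 + e • x + d • y + (e * d) • (x * y) := by
  simp only [add_mul, mul_add, one_mul, mul_one, smul_mul_smul_comm]
  abel

theorem one_add_smul_mul_one_add_smul_of_sq_eq_zero {e : R'} (he : e * e = 0) (x y : 𝒜) :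
    (1 + e • x) * (1 + e • y) = 1 + e • (x + y) := by
  rw [one_add_smul_mul_one_add_smul, he, zero_smul, add_zero, smul_add, add_assoc]

theorem one_add_smul_mul_comm {e d : R'} (he : e * e = 0) (hd : d * d = 0) (x y : 𝒜) :
    (1 + d • y) * (1 + e • x) =
      (1 + e • x) * (1 + d • y) * (1 + (e * d) • (y * x - x * y)) := by
  have h₁ : e * (e * d) = 0 := by rw [← mul_assoc, he, zero_mul]
  have h₂ : d * (e * d) = 0 := by rw [mul_left_comm, hd, mul_zero]
  have h₃ : e * d * (e * d) = 0 := by rw [mul_assoc, h₂, mul_zero]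
  rw [one_add_smul_mul_one_add_smul, one_add_smul_mul_one_add_smul, mul_comm d e]
  simp only [mul_add, add_mul, mul_sub, mul_one, one_mul, smul_mul_smul_comm, h₁, h₂, h₃,
    zero_smul, add_zero, smul_sub]
  abel

theorem isUnit_one_add_smul {e : R'} (he : e * e = 0) (x : 𝒜) : IsUnit (1 + e • x) :=
  IsNilpotent.isUnit_one_add ⟨2, by rw [sq, smul_mul_smul_comm, he, zero_smul]⟩

end SquareZero

theorem Matrix.smul_map_algebraMap_injective {R R' ι ι' : Type*} [CommRing R] [CommRing R']
    [Algebra R R'] {e : R'} (he : Function.Injective fun a : R => e * algebraMap R R' a) :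
    Function.Injective fun X : Matrix ι ι' R => e • X.map (algebraMap R R') :=
  fun _ _ h => Matrix.ext fun i j => he (congrFun (congrFun h i) j)

section Compound

variable {R : Type*} [CommRing R] {m : ℕ} (k : ℕ)

noncomputable def compoundMatrix (M : Matrix (Fin m) (Fin m) R) :
    Matrix {S : Finset (Fin m) // S.card = k} {S : Finset (Fin m) // S.card = k} R :=
  Matrix.of fun S T =>
    (M.submatrix (fun a : Fin k => ((S.1.orderIsoOfFin S.2 a : Fin m)))
      (fun b : Fin k => ((T.1.orderIsoOfFin T.2 b : Fin m)))).det

theorem compound_eq_compoundMatrix (M : Matrix (Fin m) (Fin m) ℂ) :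
    compound k M = compoundMatrix k M :=
  rfl

theorem compoundMatrix_eq_toMatrix (M : Matrix (Fin m) (Fin m) R) :
    compoundMatrix k M = LinearMap.toMatrix ((Pi.basisFun R (Fin m)).exteriorPower k)
      ((Pi.basisFun R (Fin m)).exteriorPower k) (exteriorPower.map k (Matrix.toLin' M)) := by
  -- `Set.powersetCard (Fin m) k`, which indexes the basis of `⋀^k`, unfolds to our subtype.
  refine Matrix.ext fun (S T : Set.powersetCard (Fin m) k) => ?_
  rw [LinearMap.toMatrix_apply, exteriorPower.basis_apply, exteriorPower.map_apply_ιMulti_family,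
    exteriorPower.basis_repr_apply]
  simp only [compoundMatrix, Finset.coe_orderIsoOfFin_apply, exteriorPower.ιMulti_family,
    exteriorPower.ιMultiDual_apply_ιMulti, Function.comp_apply, Pi.basisFun_apply, toLin'_apply,
    mulVec_single, MulOpposite.op_one, one_smul, Module.Basis.coord_apply, Pi.basisFun_repr,
    col_apply]
  rw [← det_transpose]
  rfl

theorem compoundMatrix_mul (M N : Matrix (Fin m) (Fin m) R) :
    compoundMatrix k (M * N) = compoundMatrix k M * compoundMatrix k N := by
  rw [compoundMatrix_eq_toMatrix, compoundMatrix_eq_toMatrix, compoundMatrix_eq_toMatrix,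
    toLin'_mul, exteriorPower.map_comp]
  exact LinearMap.toMatrix_comp _ _ _ _ _

theorem compoundMatrix_one : compoundMatrix k (1 : Matrix (Fin m) (Fin m) R) = 1 := by
  rw [compoundMatrix_eq_toMatrix, toLin'_one, exteriorPower.map_id]
  exact LinearMap.toMatrix_id _

theorem compoundMatrix_map {R' : Type*} [CommRing R'] (f : R →+* R')
    (M : Matrix (Fin m) (Fin m) R) : compoundMatrix k (M.map f) = (compoundMatrix k M).map f := by
  ext S T
  simp only [compoundMatrix, of_apply, map_apply, RingHom.map_det]
  rfl

theorem eval₂_compoundMatrix_one_add_X_smul {R' : Type*} [CommRing R'] (g : R →+* R') (x : R')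
    (A : Matrix (Fin m) (Fin m) R) (S T : {S : Finset (Fin m) // S.card = k}) :
    (compoundMatrix k (1 + (X : R[X]) • A.map C) S T).eval₂ g x =
      compoundMatrix k (1 + x • A.map g) S T := by
  have h : (1 + (X : R[X]) • A.map C).map (eval₂RingHom g x) = 1 + x • A.map g := by
    ext i j
    simp only [coe_eval₂RingHom, map_apply, Matrix.add_apply, Matrix.one_apply, Matrix.smul_apply,
      smul_eq_mul, apply_ite (eval₂ g x), eval₂_add, eval₂_one, eval₂_zero, eval₂_mul, eval₂_C,
      eval₂_X]
  rw [← h, compoundMatrix_map]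
  rfl

noncomputable def addCompoundMatrix (A : Matrix (Fin m) (Fin m) R) :
    Matrix {S : Finset (Fin m) // S.card = k} {S : Finset (Fin m) // S.card = k} R :=
  Matrix.of fun S T => (derivative (compoundMatrix k (1 + (X : R[X]) • A.map C) S T)).eval 0

theorem addCompound_eq_addCompoundMatrix (A : Matrix (Fin m) (Fin m) ℂ) :
    addCompound k A = addCompoundMatrix k A := by
  ext S T
  have h : (fun t : ℂ => compound k (1 + t • A) S T) =
      fun t => (compoundMatrix k (1 + (X : ℂ[X]) • A.map C) S T).eval t := by
    funext t
    rw [compound_eq_compoundMatrix, eval, eval₂_compoundMatrix_one_add_X_smul, RingHom.coe_id,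
      Matrix.map_id]
  rw [addCompound, of_apply, h, Polynomial.deriv]
  rfl

theorem compoundMatrix_one_add_smul_map {R' : Type*} [CommRing R'] [Algebra R R'] {e : R'}
    (he : e * e = 0) (A : Matrix (Fin m) (Fin m) R) :
    compoundMatrix k (1 + e • A.map (algebraMap R R')) =
      1 + e • (addCompoundMatrix k A).map (algebraMap R R') := by
  ext S T
  have key := aeval_add_of_sq_eq_zero (compoundMatrix k (1 + (X : R[X]) • A.map C) S T) 0 e
    (by rw [sq, he])
  rw [zero_add, ← map_zero (algebraMap R R'), aeval_algebraMap_apply_eq_algebraMap_eval,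
    aeval_algebraMap_apply_eq_algebraMap_eval, aeval_def, eval₂_compoundMatrix_one_add_X_smul,
    eval, eval₂_compoundMatrix_one_add_X_smul, zero_smul, add_zero, compoundMatrix_one] at key
  rw [key]
  simp only [addCompoundMatrix, Matrix.add_apply, Matrix.one_apply, Matrix.smul_apply, map_apply,
    of_apply, smul_eq_mul, apply_ite (algebraMap R R'), map_one, map_zero]
  ring

end Compound

section AddCompound

open TrivSqZeroExt DualNumber

universe u

variable {R : Type u} [CommRing R]

-- Stated existentially so that the proofs below run in an abstract algebra: computing directly in
-- `R[ε][ε]` makes Lean unify its several `Mul` instances and times out.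
theorem exists_algebra_sq_eq_zero_mul_algebraMap_injective :
    ∃ (R' : Type u) (_ : CommRing R') (_ : Algebra R R') (e d : R'), e * e = 0 ∧ d * d = 0 ∧
      Function.Injective fun a : R => e * d * algebraMap R R' a := by
  refine ⟨R[ε][ε], inferInstance, inferInstance, inl ε, ε, ?_, eps_mul_eps, fun a b h => ?_⟩
  · rw [← inl_mul, eps_mul_eps, inl_zero]
  · simpa [algebraMap_eq_inl', DualNumber.snd_mul, TrivSqZeroExt.fst_mul] using
      congrArg (fun x : R[ε][ε] => x.snd.snd) h

variable {m : ℕ} (k : ℕ)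

theorem addCompoundMatrix_add (A B : Matrix (Fin m) (Fin m) R) :
    addCompoundMatrix k (A + B) = addCompoundMatrix k A + addCompoundMatrix k B := by
  obtain ⟨R', _, _, e, d, he, -, hinj⟩ :=
    exists_algebra_sq_eq_zero_mul_algebraMap_injective (R := R)
  have hc : e * d * (e * d) = 0 := by rw [mul_mul_mul_comm, he, zero_mul]
  have h := congrArg (compoundMatrix k) (one_add_smul_mul_one_add_smul_of_sq_eq_zero hc
    (A.map (algebraMap R R')) (B.map (algebraMap R R')))
  rw [compoundMatrix_mul, ← Matrix.map_add _ (map_add _), compoundMatrix_one_add_smul_map k hc,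
    compoundMatrix_one_add_smul_map k hc, compoundMatrix_one_add_smul_map k hc,
    one_add_smul_mul_one_add_smul_of_sq_eq_zero hc, ← Matrix.map_add _ (map_add _)] at h
  exact (Matrix.smul_map_algebraMap_injective hinj (add_left_cancel h)).symm

theorem addCompoundMatrix_smul (s : R) (A : Matrix (Fin m) (Fin m) R) :
    addCompoundMatrix k (s • A) = s • addCompoundMatrix k A := by
  obtain ⟨R', _, _, e, d, he, -, hinj⟩ :=
    exists_algebra_sq_eq_zero_mul_algebraMap_injective (R := R)
  have hc : e * d * (e * d) = 0 := by rw [mul_mul_mul_comm, he, zero_mul]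
  have hsc : algebraMap R R' s * (e * d) * (algebraMap R R' s * (e * d)) = 0 := by
    rw [mul_mul_mul_comm, hc, mul_zero]
  have hmap : ∀ {ι : Type} (M : Matrix ι ι R), (e * d) • (s • M).map (algebraMap R R') =
      (algebraMap R R' s * (e * d)) • M.map (algebraMap R R') := fun M => by
    refine Matrix.ext fun i j => ?_
    simp only [Matrix.smul_apply, Matrix.map_apply, smul_eq_mul, map_mul]
    ring
  have h := compoundMatrix_one_add_smul_map k hsc A
  rw [← hmap, compoundMatrix_one_add_smul_map k hc, ← hmap] at h
  exact Matrix.smul_map_algebraMap_injective hinj (add_left_cancel h)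

theorem addCompoundMatrix_commutator (A B : Matrix (Fin m) (Fin m) R) :
    addCompoundMatrix k (A * B - B * A) =
      addCompoundMatrix k A * addCompoundMatrix k B -
        addCompoundMatrix k B * addCompoundMatrix k A := by
  obtain ⟨R', _, _, e, d, he, hd, hinj⟩ :=
    exists_algebra_sq_eq_zero_mul_algebraMap_injective (R := R)
  have hc : e * d * (e * d) = 0 := by rw [mul_mul_mul_comm, he, zero_mul]
  have h := congrArg (compoundMatrix k)
    (one_add_smul_mul_comm he hd (B.map (algebraMap R R')) (A.map (algebraMap R R')))
  rw [← Matrix.map_mul, ← Matrix.map_mul, ← Matrix.map_sub _ (map_sub _), compoundMatrix_mul,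
    compoundMatrix_mul, compoundMatrix_mul, compoundMatrix_one_add_smul_map k he,
    compoundMatrix_one_add_smul_map k hd, compoundMatrix_one_add_smul_map k hc,
    one_add_smul_mul_comm he hd, ← Matrix.map_mul, ← Matrix.map_mul,
    ← Matrix.map_sub _ (map_sub _)] at h
  have hU := (isUnit_one_add_smul he ((addCompoundMatrix k B).map (algebraMap R R'))).mul
    (isUnit_one_add_smul hd ((addCompoundMatrix k A).map (algebraMap R R')))
  exact (Matrix.smul_map_algebraMap_injective hinj (add_left_cancel (hU.mul_left_cancel h))).symm

noncomputable def addCompoundLinearMap :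
    Matrix (Fin m) (Fin m) R →ₗ[R]
      Matrix {S : Finset (Fin m) // S.card = k} {S : Finset (Fin m) // S.card = k} R where
  toFun := addCompoundMatrix k
  map_add' := addCompoundMatrix_add k
  map_smul' := addCompoundMatrix_smul k

end AddCompound

section Wirtinger

variable {ι ι' : Type*} [Fintype ι] [Fintype ι'] [DecidableEq ι] [DecidableEq ι']

theorem fderiv_linearMap_comp_matrix (L : Matrix ι ι' ℂ →ₗ[ℂ] ℂ) {P : ℂ → Matrix ι ι' ℂ} {z : ℂ}
    (hP : ∀ i j, DifferentiableAt ℝ (fun w => P w i j) z) (v : ℂ) :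
    fderiv ℝ (fun w => L (P w)) z v = L (Matrix.of fun i j => fderiv ℝ (fun w => P w i j) z v) := by
  have hL : ∀ M : Matrix ι ι' ℂ, L M = ∑ i, ∑ j, M i j * L (Matrix.single i j 1) := fun M => by
    conv_lhs => rw [Matrix.matrix_eq_sum_single M]
    simp only [map_sum]
    refine Finset.sum_congr rfl fun i _ => Finset.sum_congr rfl fun j _ => ?_
    rw [← smul_eq_mul, ← map_smul, Matrix.smul_single, smul_eq_mul, mul_one]
  rw [hL, show (fun w => L (P w)) = fun w => ∑ i, ∑ j, P w i j * L (Matrix.single i j 1) from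
    funext fun w => hL (P w)]
  rw [fderiv_fun_sum fun i _ => DifferentiableAt.fun_sum fun j _ => (hP i j).mul_const _]
  simp only [FunLike.coe_sum, Finset.sum_apply]
  refine Finset.sum_congr rfl fun i _ => ?_
  rw [fderiv_fun_sum fun j _ => (hP i j).mul_const _]
  simp only [FunLike.coe_sum, Finset.sum_apply]
  refine Finset.sum_congr rfl fun j _ => ?_
  rw [fderiv_mul_const (hP i j), _root_.smul_apply, smul_eq_mul, mul_comm]
  rfl

theorem wirtingerDz_linearMap_comp_matrix (L : Matrix ι ι' ℂ →ₗ[ℂ] ℂ) {P : ℂ → Matrix ι ι' ℂ}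
    {z : ℂ} (hP : ∀ i j, DifferentiableAt ℝ (fun w => P w i j) z) :
    wirtingerDz (fun w => L (P w)) z =
      L (Matrix.of fun i j => wirtingerDz (fun w => P w i j) z) := by
  have h : (Matrix.of fun i j => wirtingerDz (fun w => P w i j) z) =
      (2⁻¹ : ℂ) • (Matrix.of fun i j => fderiv ℝ (fun w => P w i j) z 1) -
        (2⁻¹ * Complex.I) • Matrix.of fun i j => fderiv ℝ (fun w => P w i j) z Complex.I := by
    ext i j
    simp only [wirtingerDz, Matrix.of_apply, Matrix.sub_apply, Matrix.smul_apply, smul_eq_mul]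
    ring
  rw [h, map_sub, map_smul, map_smul, wirtingerDz, fderiv_linearMap_comp_matrix L hP,
    fderiv_linearMap_comp_matrix L hP, smul_eq_mul, smul_eq_mul]
  ring

theorem wirtingerDzbar_linearMap_comp_matrix (L : Matrix ι ι' ℂ →ₗ[ℂ] ℂ) {P : ℂ → Matrix ι ι' ℂ}
    {z : ℂ} (hP : ∀ i j, DifferentiableAt ℝ (fun w => P w i j) z) :
    wirtingerDzbar (fun w => L (P w)) z =
      L (Matrix.of fun i j => wirtingerDzbar (fun w => P w i j) z) := by
  have h : (Matrix.of fun i j => wirtingerDzbar (fun w => P w i j) z) =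
      (2⁻¹ : ℂ) • (Matrix.of fun i j => fderiv ℝ (fun w => P w i j) z 1) +
        (2⁻¹ * Complex.I) • Matrix.of fun i j => fderiv ℝ (fun w => P w i j) z Complex.I := by
    ext i j
    simp only [wirtingerDzbar, Matrix.of_apply, Matrix.add_apply, Matrix.smul_apply, smul_eq_mul]
    ring
  rw [h, map_add, map_smul, map_smul, wirtingerDzbar, fderiv_linearMap_comp_matrix L hP,
    fderiv_linearMap_comp_matrix L hP, smul_eq_mul, smul_eq_mul]
  ring

end Wirtinger

theorem addCompound_zero_curvature_general (m k : ℕ) (U : Set ℂ) (hU : IsOpen U)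
    (P Q : ℂ → Matrix (Fin m) (Fin m) ℂ)
    (hP : ∀ i j : Fin m, ContDiffOn ℝ 1 (fun z => P z i j) U)
    (hQ : ∀ i j : Fin m, ContDiffOn ℝ 1 (fun z => Q z i j) U)
    (hzc : ∀ z ∈ U, ∀ i j : Fin m,
        wirtingerDz (fun w => Q w i j) z - wirtingerDzbar (fun w => P w i j) z
          + (P z * Q z - Q z * P z) i j = 0) :
    ∀ z ∈ U, ∀ S T : {S : Finset (Fin m) // S.card = k},
      wirtingerDz (fun w => addCompound k (Q w) S T) z
        - wirtingerDzbar (fun w => addCompound k (P w) S T) z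
        + (addCompound k (P z) * addCompound k (Q z)
            - addCompound k (Q z) * addCompound k (P z)) S T = 0 := by
  intro z hz S T
  have hPz : ∀ i j, DifferentiableAt ℝ (fun w => P w i j) z := fun i j =>
    ((hP i j).differentiableOn one_ne_zero).differentiableAt (hU.mem_nhds hz)
  have hQz : ∀ i j, DifferentiableAt ℝ (fun w => Q w i j) z := fun i j =>
    ((hQ i j).differentiableOn one_ne_zero).differentiableAt (hU.mem_nhds hz)
  have hcurv : (of fun i j => wirtingerDz (fun w => Q w i j) z) -
      (of fun i j => wirtingerDzbar (fun w => P w i j) z) = Q z * P z - P z * Q z := by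
    ext i j
    have h := hzc z hz i j
    simp only [Matrix.sub_apply, of_apply] at h ⊢
    linear_combination h
  let L := entryLinearMap ℂ ℂ S T ∘ₗ addCompoundLinearMap k
  have hL : ∀ A, addCompound k A S T = L A := fun A => by
    rw [addCompound_eq_addCompoundMatrix]
    rfl
  simp only [hL]
  rw [wirtingerDz_linearMap_comp_matrix L hQz, wirtingerDzbar_linearMap_comp_matrix L hPz,
    ← map_sub, hcurv, ← hL]
  simp only [addCompound_eq_addCompoundMatrix, addCompoundMatrix_commutator, Matrix.sub_apply]
  ring

/-- **Flatness part of Theorem 5.1 of the paper.**  If `P, Q : U → M_m(ℂ)` are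
continuously real-differentiable and satisfy the zero-curvature equation
`∂_z Q − ∂_{z̄} P + PQ − QP = 0` on `U`, then so do their `k`-th additive
compounds. -/
theorem addCompound_zero_curvature (m k : ℕ) (hm : 1 ≤ m) (hk1 : 1 ≤ k)
    (hk2 : k ≤ m) (U : Set ℂ) (hU : IsOpen U)
    (P Q : ℂ → Matrix (Fin m) (Fin m) ℂ)
    (hP : ∀ i j : Fin m, ContDiffOn ℝ 1 (fun z => P z i j) U)
    (hQ : ∀ i j : Fin m, ContDiffOn ℝ 1 (fun z => Q z i j) U)
    (hzc : ∀ z ∈ U, ∀ i j : Fin m,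
        wirtingerDz (fun w => Q w i j) z - wirtingerDzbar (fun w => P w i j) z
          + (P z * Q z - Q z * P z) i j = 0) :
    ∀ z ∈ U, ∀ S T : {S : Finset (Fin m) // S.card = k},
      wirtingerDz (fun w => addCompound k (Q w) S T) z
        - wirtingerDzbar (fun w => addCompound k (P w) S T) z
        + (addCompound k (P z) * addCompound k (Q z)
            - addCompound k (Q z) * addCompound k (P z)) S T = 0 :=
  addCompound_zero_curvature_general m k U hU P Q hP hQ hzc
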